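/- For every integer k ≥ 1, 2^k = ∑_{n=k}^{∞} (-1)^{n-k} 4^n s(n,k) / (n! (2n+1) C(2n,n)), where C(2n,n) is the central binomial coefficient. -/

import Mathlib

open scoped BigOperators

noncomputable def stirlingS1 (n k : ℕ) : ℝ :=
  (∏ i ∈ Finset.range n, (Polynomial.X - Polynomial.C (i : ℝ))).coeff k

/-!
With `c(n, k)` the unsigned Stirling numbers, `s(n, k) = (-1) ^ (n - k) c(n, k)` and
`∫₀¹ (1 - u²) ^ n du = 4 ^ n / ((2n + 1) C(2n, n))`, so the series is
`∑ c(n, k) / n! ∫₀¹ (1 - u²) ^ n du`. Its terms are nonnegative, so it may be summed under the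
integral, where the exponential generating function `∑ c(n, k) t ^ n / n! = (-log (1 - t)) ^ k / k!`
at `t = 1 - u²` gives `2 ^ k (-log u) ^ k / k!`; and `∫₀¹ (-log u) ^ k du = Γ(k + 1) = k!`
after `u = exp (-x)`.
-/

open Nat hiding log
open Real Set MeasureTheory Polynomial
open scoped Interval

theorem stirlingS1_eq_neg_one_pow_mul_stirlingFirst (n k : ℕ) :
    stirlingS1 n k = (-1) ^ (n + k) * stirlingFirst n k := by
  induction n generalizing k with
  | zero => cases k <;> simp [stirlingS1, coeff_one]
  | succ n ih =>
    have hprod : stirlingS1 (n + 1) k =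
        ((∏ i ∈ Finset.range n, (X - C (i : ℝ))) * (X - C (n : ℝ))).coeff k := by
      rw [stirlingS1, Finset.prod_range_succ]
    cases k with
    | zero =>
      rw [hprod, mul_coeff_zero, ← stirlingS1, ih]
      cases n <;> simp
    | succ k =>
      rw [hprod, coeff_mul_X_sub_C, ← stirlingS1, ← stirlingS1, ih, ih, stirlingFirst_succ_succ]
      push_cast
      ring

theorem neg_one_pow_mul_stirlingS1_add (n k : ℕ) :
    (-1) ^ n * stirlingS1 (n + k) k = stirlingFirst (n + k) k := by
  rw [stirlingS1_eq_neg_one_pow_mul_stirlingFirst, ← mul_assoc, ← pow_add,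
    show n + (n + k + k) = 2 * (n + k) by ring, pow_mul]
  simp

theorem stirlingFirst_le_factorial : ∀ n k : ℕ, stirlingFirst n k ≤ n !
  | 0, k => by cases k <;> simp
  | n + 1, 0 => by simp
  | n + 1, k + 1 => by
    rw [stirlingFirst_succ_succ, factorial_succ, add_mul, one_mul]
    exact _root_.add_le_add (Nat.mul_le_mul_left n (stirlingFirst_le_factorial n (k + 1)))
      (stirlingFirst_le_factorial n k)

theorem hasSum_intervalIntegral_of_nonneg {μ : Measure ℝ} {a b : ℝ} {F : ℕ → ℝ → ℝ} {f : ℝ → ℝ}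
    (hF : ∀ n, AEStronglyMeasurable (F n) (μ.restrict (Ι a b)))
    (hF_nonneg : ∀ n, ∀ x ∈ Ι a b, 0 ≤ F n x)
    (hF_sum : ∀ x ∈ Ι a b, HasSum (fun n ↦ F n x) (f x)) (hf : IntervalIntegrable f μ a b) :
    HasSum (fun n ↦ ∫ x in a..b, F n x ∂μ) (∫ x in a..b, f x ∂μ) := by
  refine intervalIntegral.hasSum_integral_of_dominated_convergence F hF
    (fun n ↦ ae_of_all _ fun x hx ↦ (Real.norm_of_nonneg (hF_nonneg n x hx)).le)
    (ae_of_all _ fun x hx ↦ (hF_sum x hx).summable) ?_ (ae_of_all _ hF_sum)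
  exact hf.congr fun x hx ↦ (hF_sum x hx).tsum_eq.symm

section GeneratingFunction

variable {t : ℝ}

theorem summable_stirlingFirst_succ_mul_pow_div_factorial (k : ℕ) (h0 : 0 ≤ t) (h1 : t < 1) :
    Summable fun m ↦ (stirlingFirst (m + 1) (k + 1) : ℝ) * t ^ m / m ! := by
  have hgeom : Summable fun m : ℕ ↦ ((m : ℝ) + 1) * t ^ m := by
    simpa [add_mul] using (summable_pow_mul_geometric_of_norm_lt_one 1
      (by rwa [Real.norm_of_nonneg h0] : ‖t‖ < 1)).add (summable_geometric_of_lt_one h0 h1)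
  refine hgeom.of_nonneg_of_le (fun m ↦ by positivity) fun m ↦ ?_
  have hle : (stirlingFirst (m + 1) (k + 1) : ℝ) ≤ (m + 1) * m ! := by
    exact_mod_cast (stirlingFirst_le_factorial (m + 1) (k + 1)).trans_eq (factorial_succ m)
  rw [div_le_iff₀ (by positivity)]
  nlinarith [pow_nonneg h0 m]

/-- The recurrence `c(m+1, k+1) = m c(m, k+1) + c(m, k)` says `(1 - t) C'_{k+1} = C_k` for the
exponential generating functions `C_k` of the columns of `stirlingFirst`. -/
theorem HasSum.stirlingFirst_succ {k : ℕ} {B : ℝ} (h0 : 0 ≤ t) (h1 : t < 1)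
    (hB : HasSum (fun m ↦ (stirlingFirst m k : ℝ) * t ^ m / m !) B) :
    HasSum (fun m ↦ (stirlingFirst (m + 1) (k + 1) : ℝ) * t ^ m / m !) (B / (1 - t)) := by
  set D := ∑' m, ((stirlingFirst (m + 1) (k + 1) : ℝ) * t ^ m / m !)
  have hD : HasSum (fun m ↦ (stirlingFirst (m + 1) (k + 1) : ℝ) * t ^ m / m !) D :=
    (summable_stirlingFirst_succ_mul_pow_div_factorial k h0 h1).hasSum
  have hshift : HasSum (fun m ↦ m * (stirlingFirst m (k + 1) : ℝ) * t ^ m / m !) (t * D) := by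
    rw [← hasSum_nat_add_iff' 1, Finset.sum_range_one]
    simp only [CharP.cast_eq_zero, zero_mul, zero_div, sub_zero]
    refine (hD.mul_left t).congr_fun fun m ↦ ?_
    rw [factorial_succ]
    push_cast
    field_simp
    ring
  have hrec : HasSum (fun m ↦ (stirlingFirst (m + 1) (k + 1) : ℝ) * t ^ m / m !) (t * D + B) :=
    (hshift.add hB).congr_fun fun m ↦ by
      rw [stirlingFirst_succ_succ]
      push_cast
      ring
  have hDB : D * (1 - t) = B := by linear_combination hD.unique hrec
  rwa [← eq_div_of_mul_eq (by linarith) hDB]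

theorem hasDerivAt_neg_log_one_sub_pow_div_factorial (k : ℕ) (ht : t < 1) :
    HasDerivAt (fun x ↦ (-log (1 - x)) ^ (k + 1) / (k + 1)!)
      ((-log (1 - t)) ^ k / k ! / (1 - t)) t := by
  have hlog : HasDerivAt (fun x ↦ -log (1 - x)) (1 - t)⁻¹ t :=
    (((hasDerivAt_id t).const_sub 1).log (sub_ne_zero.2 ht.ne')).neg.congr_deriv (by simp [neg_div])
  refine ((hlog.pow (k + 1)).div_const ((k + 1)! : ℝ)).congr_deriv ?_
  rw [factorial_succ]
  push_cast
  field_simp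

theorem hasSum_stirlingFirst_mul_pow_div_factorial (k : ℕ) (h0 : 0 ≤ t) (h1 : t < 1) :
    HasSum (fun m ↦ (stirlingFirst m k : ℝ) * t ^ m / m !) ((-log (1 - t)) ^ k / k !) := by
  induction k generalizing t with
  | zero =>
    convert hasSum_single (f := fun m ↦ (stirlingFirst m 0 : ℝ) * t ^ m / m !) 0
      fun m hm ↦ ?_ using 1
    · simp
    · obtain ⟨m, rfl⟩ := exists_eq_succ_of_ne_zero hm
      simp
  | succ k ih =>
    rw [← hasSum_nat_add_iff' 1]
    simp only [Finset.sum_range_one, stirlingFirst_zero_succ, CharP.cast_eq_zero, zero_mul,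
      zero_div, sub_zero]
    have hterm (m : ℕ) : ∫ s in (0 : ℝ)..t, (stirlingFirst (m + 1) (k + 1) : ℝ) * s ^ m / m ! =
        (stirlingFirst (m + 1) (k + 1) : ℝ) * t ^ (m + 1) / (m + 1)! := by
      simp_rw [mul_div_right_comm _ (_ ^ _)]
      rw [intervalIntegral.integral_const_mul, integral_pow, factorial_succ]
      push_cast
      field_simp
      ring
    have hcont : ContinuousOn (fun s ↦ (-log (1 - s)) ^ k / k ! / (1 - s)) (uIcc 0 t) := by
      intro s hs
      rw [uIcc_of_le h0] at hs
      have : 1 - s ≠ 0 := by linarith [hs.2]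
      exact ContinuousAt.continuousWithinAt (by fun_prop (disch := assumption))
    have hint : ∫ s in (0 : ℝ)..t, (-log (1 - s)) ^ k / k ! / (1 - s) =
        (-log (1 - t)) ^ (k + 1) / (k + 1)! := by
      rw [intervalIntegral.integral_eq_sub_of_hasDerivAt
        (fun s hs ↦ hasDerivAt_neg_log_one_sub_pow_div_factorial k ?_) hcont.intervalIntegrable]
      · simp
      · rw [uIcc_of_le h0] at hs
        linarith [hs.2]
    simp_rw [← hterm, ← hint]
    refine hasSum_intervalIntegral_of_nonneg (fun m ↦ by fun_prop) ?_ ?_ hcont.intervalIntegrable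
    · intro m s hs
      rw [uIoc_of_le h0] at hs
      have := hs.1.le
      positivity
    · intro s hs
      rw [uIoc_of_le h0] at hs
      exact (ih hs.1.le (hs.2.trans_lt h1)).stirlingFirst_succ hs.1.le (hs.2.trans_lt h1)

end GeneratingFunction

theorem integral_one_sub_sq_pow_succ (m : ℕ) :
    (2 * m + 3 : ℝ) * ∫ u in (0 : ℝ)..1, (1 - u ^ 2) ^ (m + 1) =
      (2 * m + 2 : ℝ) * ∫ u in (0 : ℝ)..1, (1 - u ^ 2) ^ m := by
  have hderiv (u : ℝ) : HasDerivAt (fun u ↦ u * (1 - u ^ 2) ^ (m + 1))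
      ((2 * m + 3) * (1 - u ^ 2) ^ (m + 1) - (2 * m + 2) * (1 - u ^ 2) ^ m) u := by
    refine ((hasDerivAt_id u).mul (((hasDerivAt_pow 2 u).const_sub 1).pow (m + 1))).congr_deriv ?_
    simp only [id, Pi.pow_apply, Nat.add_sub_cancel, Nat.cast_add, Nat.cast_one]
    ring
  have hFTC := intervalIntegral.integral_eq_sub_of_hasDerivAt (fun u _ ↦ hderiv u)
    (Continuous.intervalIntegrable (by fun_prop) 0 1)
  rw [intervalIntegral.integral_sub (Continuous.intervalIntegrable (by fun_prop) 0 1)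
    (Continuous.intervalIntegrable (by fun_prop) 0 1), intervalIntegral.integral_const_mul,
    intervalIntegral.integral_const_mul] at hFTC
  norm_num at hFTC
  linarith

theorem integral_one_sub_sq_pow (m : ℕ) :
    ∫ u in (0 : ℝ)..1, (1 - u ^ 2) ^ m = (4 ^ m / ((2 * m + 1) * centralBinom m) : ℝ) := by
  induction m with
  | zero => simp
  | succ m ih =>
    have hrec := integral_one_sub_sq_pow_succ m
    have hbinom : ((m + 1 : ℕ) : ℝ) * centralBinom (m + 1) = 2 * (2 * m + 1) * centralBinom m := by
      exact_mod_cast succ_mul_centralBinom_succ m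
    have hpos : (0 : ℝ) < centralBinom m := by exact_mod_cast centralBinom_pos m
    have hpos' : (0 : ℝ) < centralBinom (m + 1) := by exact_mod_cast centralBinom_pos (m + 1)
    rw [ih] at hrec
    push_cast at hbinom ⊢
    rw [eq_div_iff (by positivity)]
    field_simp at hrec
    refine mul_left_cancel₀ (by positivity : (m + 1 : ℝ) ≠ 0) ?_
    linear_combination 2 * hrec + (2 * m + 3) * (∫ u in (0 : ℝ)..1, (1 - u ^ 2) ^ (m + 1)) * hbinom

theorem image_exp_neg_Ioi_zero : (fun x ↦ exp (-x)) '' Ioi 0 = Ioo 0 1 := by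
  rw [← exp_zero, ← image_exp_Iio, ← neg_zero, ← image_neg_Ioi, image_image, neg_zero]

theorem hasDerivWithinAt_exp_neg (x : ℝ) (s : Set ℝ) :
    HasDerivWithinAt (fun x ↦ exp (-x)) (-exp (-x)) s x :=
  ((hasDerivAt_neg' x).exp.congr_deriv (by ring)).hasDerivWithinAt

theorem abs_deriv_smul_neg_log_pow (k : ℕ) :
    (fun x ↦ |-exp (-x)| • (-log (exp (-x))) ^ k) = fun x ↦ exp (-x) * x ^ ((k + 1 : ℝ) - 1) := by
  ext x
  simp [abs_of_pos (exp_pos _), ← rpow_natCast]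

theorem intervalIntegrable_neg_log_pow (k : ℕ) :
    IntervalIntegrable (fun u ↦ (-log u) ^ k) volume 0 1 := by
  rw [intervalIntegrable_iff_integrableOn_Ioo_of_le zero_le_one, ← image_exp_neg_Ioi_zero,
    integrableOn_image_iff_integrableOn_abs_deriv_smul measurableSet_Ioi
      (fun x _ ↦ hasDerivWithinAt_exp_neg x _) (exp_injective.comp neg_injective).injOn,
    abs_deriv_smul_neg_log_pow]
  exact GammaIntegral_convergent (by positivity)

theorem integral_neg_log_pow (k : ℕ) : ∫ u in (0 : ℝ)..1, (-log u) ^ k = k ! := by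
  rw [intervalIntegral.integral_of_le zero_le_one, integral_Ioc_eq_integral_Ioo,
    ← image_exp_neg_Ioi_zero, integral_image_eq_integral_abs_deriv_smul
    measurableSet_Ioi (fun x _ ↦ hasDerivWithinAt_exp_neg x _)
    (exp_injective.comp neg_injective).injOn, abs_deriv_smul_neg_log_pow,
    ← Gamma_eq_integral (by positivity), Gamma_nat_eq_factorial]

theorem hasSum_stirlingFirst_div_factorial_mul_integral (k : ℕ) :
    HasSum (fun m ↦ (stirlingFirst m k : ℝ) / m ! * ∫ u in (0 : ℝ)..1, (1 - u ^ 2) ^ m)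
      (2 ^ k) := by
  have hint : IntervalIntegrable (fun u ↦ 2 ^ k / k ! * (-log u) ^ k) volume 0 1 :=
    (intervalIntegrable_neg_log_pow k).const_mul _
  have hval : ∫ u in (0 : ℝ)..1, 2 ^ k / k ! * (-log u) ^ k = 2 ^ k := by
    rw [intervalIntegral.integral_const_mul, integral_neg_log_pow]
    field_simp
  simp_rw [← intervalIntegral.integral_const_mul]
  rw [← hval]
  refine hasSum_intervalIntegral_of_nonneg (fun m ↦ by fun_prop) ?_ ?_ hint
  · intro m u hu
    rw [uIoc_of_le zero_le_one] at hu
    have : 0 ≤ 1 - u ^ 2 := by nlinarith [hu.1, hu.2]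
    positivity
  · intro u hu
    rw [uIoc_of_le zero_le_one] at hu
    have hegf := hasSum_stirlingFirst_mul_pow_div_factorial k (t := 1 - u ^ 2)
      (by nlinarith [hu.1, hu.2]) (by nlinarith [hu.1])
    rw [sub_sub_cancel, Real.log_pow, Nat.cast_ofNat, neg_mul_eq_mul_neg, mul_pow] at hegf
    convert hegf using 2 with m <;> ring

theorem two_pow_eq_stirling_central_binom_series_general (k : ℕ) :
    (2 : ℝ) ^ k =
      ∑' n : ℕ, (-1) ^ n * 4 ^ (n + k) * stirlingS1 (n + k) k /
        ((Nat.factorial (n + k)) * (2 * (n + k) + 1) * ((2 * (n + k)).choose (n + k))) := by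
  have hsum := (hasSum_nat_add_iff' k).2 (hasSum_stirlingFirst_div_factorial_mul_integral k)
  rw [Finset.sum_eq_zero fun m hm ↦ by simp [stirlingFirst_eq_zero_of_lt (Finset.mem_range.1 hm)],
    sub_zero] at hsum
  rw [← hsum.tsum_eq]
  refine tsum_congr fun n ↦ ?_
  rw [mul_right_comm, neg_one_pow_mul_stirlingS1_add, integral_one_sub_sq_pow,
    centralBinom_eq_two_mul_choose]
  push_cast
  field_simp

theorem two_pow_eq_stirling_central_binom_series (k : ℕ) (hk : 1 ≤ k) :
    (2 : ℝ) ^ k =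
      ∑' n : ℕ, (-1) ^ n * 4 ^ (n + k) * stirlingS1 (n + k) k /
        ((Nat.factorial (n + k)) * (2 * (n + k) + 1) * ((2 * (n + k)).choose (n + k))) :=
  two_pow_eq_stirling_central_binom_series_general k
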